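/- arXiv:2407.20747 — 8 statements merged into one kernel-verified Lean document; each statement's English description precedes it below -/
import Mathlib

section
/- Let T1, T2, T3, T4 be smooth antihermitian k×k matrix-valued functions of a real variable s, and define α = T4 + i T3, β = T1 + i T2, L(ζ) = β - (α + α†)ζ - β† ζ², M(ζ) = -α - β† ζ for a complex parameter ζ. Then the Nahm equations dTi/ds = [T4, Ti] + (1/2)∑_{j,l} ε_{ijl}[Tj, Tl] (for i = 1,2,3) hold if and only if the Lax equation dL/ds = [L, M] holds for all ζ ∈ ℂ. -/
open Matrix Finset

/-- Levi-Civita symbol on three indices, with `eps 0 1 2 = 1`. -/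
def eps (i j l : Fin 3) : ℤ :=
  if (i, j, l) ∈ [((0 : Fin 3), (1 : Fin 3), (2 : Fin 3)), (1, 2, 0), (2, 0, 1)] then 1
  else if (i, j, l) ∈ [((0 : Fin 3), (2 : Fin 3), (1 : Fin 3)), (2, 1, 0), (1, 0, 2)] then -1
  else 0

/-- `α = T₄ + i T₃`. -/
def nahmAlpha {k : ℕ} (T3 T4 : ℝ → Matrix (Fin k) (Fin k) ℂ) (s : ℝ) :
    Matrix (Fin k) (Fin k) ℂ :=
  T4 s + Complex.I • T3 s

/-- `β = T₁ + i T₂`. -/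
def nahmBeta {k : ℕ} (T1 T2 : ℝ → Matrix (Fin k) (Fin k) ℂ) (s : ℝ) :
    Matrix (Fin k) (Fin k) ℂ :=
  T1 s + Complex.I • T2 s

/-- The Lax matrix `L(ζ) = β - (α + α†)ζ - β† ζ²`. -/
def laxL {k : ℕ} (T1 T2 T3 T4 : ℝ → Matrix (Fin k) (Fin k) ℂ) (ζ : ℂ) (s : ℝ) :
    Matrix (Fin k) (Fin k) ℂ :=
  nahmBeta T1 T2 s - ζ • (nahmAlpha T3 T4 s + (nahmAlpha T3 T4 s)ᴴ)
    - (ζ ^ 2) • (nahmBeta T1 T2 s)ᴴ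

/-- The Lax matrix `M(ζ) = -α - β† ζ`. -/
def laxM {k : ℕ} (T1 T2 T3 T4 : ℝ → Matrix (Fin k) (Fin k) ℂ) (ζ : ℂ) (s : ℝ) :
    Matrix (Fin k) (Fin k) ℂ :=
  -nahmAlpha T3 T4 s - ζ • (nahmBeta T1 T2 s)ᴴ

lemma laxL_eq {k : ℕ} (T1 T2 T3 T4 : ℝ → Matrix (Fin k) (Fin k) ℂ)
    (h1 : ∀ s, (T1 s)ᴴ = -(T1 s)) (h2 : ∀ s, (T2 s)ᴴ = -(T2 s))
    (h3 : ∀ s, (T3 s)ᴴ = -(T3 s)) (h4 : ∀ s, (T4 s)ᴴ = -(T4 s))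
    (ζ : ℂ) (t : ℝ) :
    laxL T1 T2 T3 T4 ζ t = (1 + ζ^2) • T1 t + (Complex.I*(1 - ζ^2)) • T2 t
      + (-(2*Complex.I*ζ)) • T3 t := by
  simp only [laxL, nahmBeta, nahmAlpha, conjTranspose_add, conjTranspose_smul, h1, h2, h3, h4,
    Complex.star_def, Complex.conj_I]
  module

lemma laxM_eq {k : ℕ} (T1 T2 T3 T4 : ℝ → Matrix (Fin k) (Fin k) ℂ)
    (h1 : ∀ s, (T1 s)ᴴ = -(T1 s)) (h2 : ∀ s, (T2 s)ᴴ = -(T2 s))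
    (ζ : ℂ) (t : ℝ) :
    laxM T1 T2 T3 T4 ζ t = ζ • T1 t + (-(Complex.I*ζ)) • T2 t
      + (-Complex.I) • T3 t + (-1 : ℂ) • T4 t := by
  simp only [laxM, nahmBeta, nahmAlpha, conjTranspose_add, conjTranspose_smul, h1, h2,
    Complex.star_def, Complex.conj_I]
  module

lemma lax_comm_eq {k : ℕ} (T1 T2 T3 T4 : ℝ → Matrix (Fin k) (Fin k) ℂ)
    (h1 : ∀ s, (T1 s)ᴴ = -(T1 s)) (h2 : ∀ s, (T2 s)ᴴ = -(T2 s))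
    (h3 : ∀ s, (T3 s)ᴴ = -(T3 s)) (h4 : ∀ s, (T4 s)ᴴ = -(T4 s))
    (ζ : ℂ) (s : ℝ) :
    ⁅laxL T1 T2 T3 T4 ζ s, laxM T1 T2 T3 T4 ζ s⁆ =
      (1 + ζ^2) • (⁅T4 s, T1 s⁆ + ⁅T2 s, T3 s⁆)
      + (Complex.I*(1 - ζ^2)) • (⁅T4 s, T2 s⁆ + ⁅T3 s, T1 s⁆)
      + (-(2*Complex.I*ζ)) • (⁅T4 s, T3 s⁆ + ⁅T1 s, T2 s⁆) := by
  rw [laxL_eq T1 T2 T3 T4 h1 h2 h3 h4, laxM_eq T1 T2 T3 T4 h1 h2]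
  simp only [Ring.lie_def, add_mul, mul_add, sub_mul, mul_sub, smul_mul_assoc, mul_smul_comm,
    smul_smul, smul_add, smul_sub, smul_neg, neg_mul, mul_neg]
  match_scalars
  all_goals (first
    | ring1
    | linear_combination (ζ^2+1) * Complex.I_sq
    | linear_combination (-2*(ζ^2+1)) * Complex.I_sq
    | linear_combination (-(ζ^2+1)) * Complex.I_sq)

/-- Nahm's equations hold iff the Lax equation `dL/ds = [L, M]` holds for all `ζ ∈ ℂ`. -/
theorem nahm_iff_lax {k : ℕ} (T1 T2 T3 T4 : ℝ → Matrix (Fin k) (Fin k) ℂ)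
    (hdiff : ∀ (Ta : ℝ → Matrix (Fin k) (Fin k) ℂ), Ta ∈ [T1, T2, T3, T4] →
      ∀ r c : Fin k, Differentiable ℝ fun s => Ta s r c)
    (hsmooth : ∀ (Ta : ℝ → Matrix (Fin k) (Fin k) ℂ), Ta ∈ [T1, T2, T3, T4] →
      ∀ r c : Fin k, ContDiff ℝ (⊤ : ℕ∞) fun s => Ta s r c)
    (hskew : ∀ (Ta : ℝ → Matrix (Fin k) (Fin k) ℂ), Ta ∈ [T1, T2, T3, T4] →
      ∀ s : ℝ, (Ta s)ᴴ = -(Ta s)) :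
    (∀ (i : Fin 3) (s : ℝ) (r c : Fin k),
        deriv (fun t => (![T1, T2, T3] i) t r c) s =
          (⁅T4 s, (![T1, T2, T3] i) s⁆ +
            (2⁻¹ : ℂ) • ∑ j : Fin 3, ∑ l : Fin 3,
              (eps i j l : ℂ) • ⁅(![T1, T2, T3] j) s, (![T1, T2, T3] l) s⁆) r c) ↔
    (∀ (ζ : ℂ) (s : ℝ) (r c : Fin k),
        deriv (fun t => laxL T1 T2 T3 T4 ζ t r c) s =
          ⁅laxL T1 T2 T3 T4 ζ s, laxM T1 T2 T3 T4 ζ s⁆ r c) := by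
  have h1 := hskew T1 (by simp)
  have h2 := hskew T2 (by simp)
  have h3 := hskew T3 (by simp)
  have h4 := hskew T4 (by simp)
  -- the Nahm right-hand sides
  set N1 : ℝ → Matrix (Fin k) (Fin k) ℂ := fun s => ⁅T4 s, T1 s⁆ + ⁅T2 s, T3 s⁆ with hN1
  set N2 : ℝ → Matrix (Fin k) (Fin k) ℂ := fun s => ⁅T4 s, T2 s⁆ + ⁅T3 s, T1 s⁆ with hN2
  set N3 : ℝ → Matrix (Fin k) (Fin k) ℂ := fun s => ⁅T4 s, T3 s⁆ + ⁅T1 s, T2 s⁆ with hN3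
  -- simplify the eps sums
  have e0 : ∀ s : ℝ, (⁅T4 s, T1 s⁆ + (2⁻¹ : ℂ) • ∑ j : Fin 3, ∑ l : Fin 3,
      (eps 0 j l : ℂ) • ⁅(![T1, T2, T3] j) s, (![T1, T2, T3] l) s⁆) = N1 s := by
    intro s
    simp [Fin.sum_univ_three, eps, Ring.lie_def, hN1, smul_sub, smul_smul]
    module
  have e1 : ∀ s : ℝ, (⁅T4 s, T2 s⁆ + (2⁻¹ : ℂ) • ∑ j : Fin 3, ∑ l : Fin 3,
      (eps 1 j l : ℂ) • ⁅(![T1, T2, T3] j) s, (![T1, T2, T3] l) s⁆) = N2 s := by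
    intro s
    simp [Fin.sum_univ_three, eps, Ring.lie_def, hN2, smul_sub, smul_smul]
    module
  have e2 : ∀ s : ℝ, (⁅T4 s, T3 s⁆ + (2⁻¹ : ℂ) • ∑ j : Fin 3, ∑ l : Fin 3,
      (eps 2 j l : ℂ) • ⁅(![T1, T2, T3] j) s, (![T1, T2, T3] l) s⁆) = N3 s := by
    intro s
    simp [Fin.sum_univ_three, eps, Ring.lie_def, hN3, smul_sub, smul_smul]
    module
  -- derivative of the Lax matrix, entrywise
  have hder : ∀ (ζ : ℂ) (s : ℝ) (r c : Fin k),
      deriv (fun t => laxL T1 T2 T3 T4 ζ t r c) s =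
        (1 + ζ^2) * deriv (fun t => T1 t r c) s
        + (Complex.I*(1 - ζ^2)) * deriv (fun t => T2 t r c) s
        + (-(2*Complex.I*ζ)) * deriv (fun t => T3 t r c) s := by
    intro ζ s r c
    have e : (fun t => laxL T1 T2 T3 T4 ζ t r c)
        = fun t => (1 + ζ^2) * T1 t r c + (Complex.I*(1 - ζ^2)) * T2 t r c
          + (-(2*Complex.I*ζ)) * T3 t r c := by
      funext t
      rw [laxL_eq T1 T2 T3 T4 h1 h2 h3 h4]
      simp [Matrix.add_apply, Matrix.smul_apply, smul_eq_mul]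
    rw [e]
    have d1 : HasDerivAt (fun t => T1 t r c) (deriv (fun t => T1 t r c) s) s :=
      (hdiff T1 (by simp) r c s).hasDerivAt
    have d2 : HasDerivAt (fun t => T2 t r c) (deriv (fun t => T2 t r c) s) s :=
      (hdiff T2 (by simp) r c s).hasDerivAt
    have d3 : HasDerivAt (fun t => T3 t r c) (deriv (fun t => T3 t r c) s) s :=
      (hdiff T3 (by simp) r c s).hasDerivAt
    exact (((d1.const_mul _).add (d2.const_mul _)).add (d3.const_mul _)).deriv
  constructor
  · -- Nahm → Lax
    intro hN ζ s r c
    have n1 := hN 0 s r c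
    have n2 := hN 1 s r c
    have n3 := hN 2 s r c
    simp only [Matrix.cons_val_zero, Matrix.cons_val_one, Matrix.head_cons,
      Matrix.cons_val_two, Matrix.tail_cons] at n1 n2 n3
    rw [e0 s] at n1
    rw [e1 s] at n2
    rw [e2 s] at n3
    rw [hder ζ s r c, n1, n2, n3, lax_comm_eq T1 T2 T3 T4 h1 h2 h3 h4]
    simp [Matrix.add_apply, Matrix.smul_apply, smul_eq_mul, hN1, hN2, hN3]
    ring
  · -- Lax → Nahm
    intro hL i s r c
    have E : ∀ ζ : ℂ,
        (1 + ζ^2) * deriv (fun t => T1 t r c) s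
        + (Complex.I*(1 - ζ^2)) * deriv (fun t => T2 t r c) s
        + (-(2*Complex.I*ζ)) * deriv (fun t => T3 t r c) s
        = (1 + ζ^2) * N1 s r c + (Complex.I*(1 - ζ^2)) * N2 s r c
          + (-(2*Complex.I*ζ)) * N3 s r c := by
      intro ζ
      rw [← hder ζ s r c, hL ζ s r c, lax_comm_eq T1 T2 T3 T4 h1 h2 h3 h4]
      simp [Matrix.add_apply, Matrix.smul_apply, smul_eq_mul, hN1, hN2, hN3]
      ring
    have hd1 : deriv (fun t => T1 t r c) s = N1 s r c := by
      linear_combination (E 1) / 4 + (E (-1)) / 4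
    have hd3 : deriv (fun t => T3 t r c) s = N3 s r c := by
      have h : Complex.I * deriv (fun t => T3 t r c) s = Complex.I * N3 s r c := by
        linear_combination (E (-1)) / 4 - (E 1) / 4
      exact mul_left_cancel₀ Complex.I_ne_zero h
    have hd2 : deriv (fun t => T2 t r c) s = N2 s r c := by
      have h : Complex.I * deriv (fun t => T2 t r c) s = Complex.I * N2 s r c := by
        linear_combination (E 0) - hd1
      exact mul_left_cancel₀ Complex.I_ne_zero h
    fin_cases i
    · simpa only [Fin.zero_eta, Matrix.cons_val_zero, e0 s] using hd1
    · simpa only [Fin.mk_one, Matrix.cons_val_one, Matrix.cons_val_zero, Matrix.head_cons, e1 s] using hd2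
    · simpa only [Fin.reduceFinMk, Matrix.cons_val_two, Matrix.tail_cons, Matrix.head_cons,
        e2 s] using hd3
end

section
/- Suppose antihermitian matrix-valued functions T1(s), T2(s), T3(s) satisfy Nahm's equations dTi/ds = (1/2)∑ ε_{ijl}[Tj, Tl], and suppose each s·Ti(s) extends continuously to s = 0 with limits -Xi := -lim_{s→0} s Ti(s). Then the matrices Xi satisfy the su(2) commutation relations [Xi, Xj] = ∑_l ε_{ijl} Xl. -/
open Matrix Filter Set

/-!
Multiplying Nahm's equations by `s²` and letting `s → 0⁺`, the left side tends to `Xᵢ` and the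
right side, being quadratic in the `Tⱼ`, tends to its value at `-X`, which equals its value at
`X`. Hence `Xᵢ = ½ ∑ ε_{ijl} [Xⱼ, Xₗ] = [X_{i+1}, X_{i+2}]`, and these cyclic relations are the
`su(2)` relations.
-/

open Topology

section NahmField

variable (𝕜 : Type*) {L : Type*} [Field 𝕜] [LieRing L] [LieAlgebra 𝕜 L]

def nahmField (Y : Fin 3 → L) (i : Fin 3) : L :=
  (2⁻¹ : 𝕜) • ∑ j, ∑ l, (eps i j l : 𝕜) • ⁅Y j, Y l⁆

variable {𝕜}

lemma nahmField_smul (c : 𝕜) (Y : Fin 3 → L) (i : Fin 3) :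
    nahmField 𝕜 (c • Y) i = c ^ 2 • nahmField 𝕜 Y i := by
  simp only [nahmField, Pi.smul_apply, smul_lie, lie_smul, smul_smul, ← sq, Finset.smul_sum,
    mul_comm (c ^ 2), mul_assoc]

lemma nahmField_neg (Y : Fin 3 → L) (i : Fin 3) : nahmField 𝕜 (-Y) i = nahmField 𝕜 Y i := by
  simp only [nahmField, Pi.neg_apply, neg_lie, lie_neg, neg_neg]

lemma nahmField_eq_lie [NeZero (2 : 𝕜)] (Y : Fin 3 → L) (i : Fin 3) :
    nahmField 𝕜 Y i = ⁅Y (i + 1), Y (i + 2)⁆ := by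
  fin_cases i <;> simp [nahmField, Fin.sum_univ_three, eps] <;>
    rw [← add_smul, ← two_mul, mul_inv_cancel₀ two_ne_zero, one_smul]

end NahmField

lemma lie_eq_sum_eps_smul_of_eq_lie {𝕜 L : Type*} [Ring 𝕜] [LieRing L] [Module 𝕜 L]
    {X : Fin 3 → L} (h : ∀ i, X i = ⁅X (i + 1), X (i + 2)⁆) (i j : Fin 3) :
    ⁅X i, X j⁆ = ∑ l, (eps i j l : 𝕜) • X l := by
  have h0 : ⁅X 1, X 2⁆ = X 0 := (h 0).symm
  have h1 : ⁅X 2, X 0⁆ = X 1 := (h 1).symm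
  have h2 : ⁅X 0, X 1⁆ = X 2 := (h 2).symm
  fin_cases i <;> fin_cases j <;>
    simp [eps, h0, h1, h2, ← lie_skew (X 0) (X 2), ← lie_skew (X 1) (X 0), ← lie_skew (X 2) (X 1)]

section Topological

attribute [local instance] LieRing.ofAssociativeRing

variable {α 𝕜 A : Type*} [Field 𝕜] [Ring A] [Algebra 𝕜 A] [TopologicalSpace A]
  [IsTopologicalRing A] [ContinuousConstSMul 𝕜 A]

lemma continuous_nahmField (i : Fin 3) : Continuous fun Y : Fin 3 → A => nahmField 𝕜 Y i := by
  simp only [nahmField, Ring.lie_def]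
  fun_prop

lemma tendsto_sq_smul_nahmField {l : Filter α} {c : α → 𝕜} {T : Fin 3 → α → A} {Y : Fin 3 → A}
    (hT : ∀ j, Tendsto (fun s => c s • T j s) l (𝓝 (Y j))) (i : Fin 3) :
    Tendsto (fun s => c s ^ 2 • nahmField 𝕜 (T · s) i) l (𝓝 (nahmField 𝕜 Y i)) := by
  simp only [← nahmField_smul]
  exact ((continuous_nahmField i).tendsto Y).comp (tendsto_pi_nhds.2 hT)

end Topological

theorem residues_form_su2_rep_general {k : ℕ} (δ : ℝ) (hδ : 0 < δ)
    (T : Fin 3 → ℝ → Matrix (Fin k) (Fin k) ℂ)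
    (X : Fin 3 → Matrix (Fin k) (Fin k) ℂ)
    (hnahm : ∀ (i : Fin 3), ∀ s ∈ Ioo (0 : ℝ) δ, ∀ r c : Fin k,
      deriv (fun t => T i t r c) s =
        ((2⁻¹ : ℂ) • ∑ j : Fin 3, ∑ l : Fin 3,
          (eps i j l : ℂ) • ⁅T j s, T l s⁆) r c)
    (hlim : ∀ (i : Fin 3) (r c : Fin k),
      Tendsto (fun s : ℝ => (s : ℂ) * T i s r c)
        (nhdsWithin 0 (Ioo 0 δ)) (nhds (-(X i r c))))
    (hlim' : ∀ (i : Fin 3) (r c : Fin k),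
      Tendsto (fun s : ℝ => (s : ℂ) ^ 2 * deriv (fun t => T i t r c) s)
        (nhdsWithin 0 (Ioo 0 δ)) (nhds (X i r c))) :
    ∀ i j : Fin 3, ⁅X i, X j⁆ = ∑ l : Fin 3, (eps i j l : ℂ) • X l := by
  -- Matrices carry the commutator bracket but no global `LieRing` instance.
  let : LieRing (Matrix (Fin k) (Fin k) ℂ) := LieRing.ofAssociativeRing
  have := left_nhdsWithin_Ioo_neBot hδ
  have hT (j : Fin 3) : Tendsto (fun s : ℝ => (s : ℂ) • T j s) (𝓝[Ioo 0 δ] 0) (𝓝 (-X j)) :=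
    tendsto_pi_nhds.2 fun r => tendsto_pi_nhds.2 fun c => hlim j r c
  have hX (i : Fin 3) : X i = ⁅X (i + 1), X (i + 2)⁆ := by
    rw [← nahmField_eq_lie (𝕜 := ℂ), ← nahmField_neg]
    refine tendsto_nhds_unique ?_ (tendsto_sq_smul_nahmField hT i)
    refine (tendsto_pi_nhds.2 fun r => tendsto_pi_nhds.2 fun c => hlim' i r c).congr' ?_
    filter_upwards [self_mem_nhdsWithin] with s hs
    ext r c
    rw [Matrix.smul_apply, hnahm i s hs r c, smul_eq_mul]
    rfl
  exact lie_eq_sum_eps_smul_of_eq_lie hX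

/-- If antihermitian Nahm matrices have a simple pole at `s = 0` with residues `-Xᵢ`, then
the `Xᵢ` satisfy the `su(2)` commutation relations `[Xᵢ, Xⱼ] = ∑ₗ ε_{ijl} Xₗ`. -/
theorem residues_form_su2_rep {k : ℕ} (δ : ℝ) (hδ : 0 < δ)
    (T : Fin 3 → ℝ → Matrix (Fin k) (Fin k) ℂ)
    (X : Fin 3 → Matrix (Fin k) (Fin k) ℂ)
    (hdiff : ∀ (i : Fin 3) (r c : Fin k),
      DifferentiableOn ℝ (fun s => T i s r c) (Ioo 0 δ))
    (hskew : ∀ (i : Fin 3), ∀ s ∈ Ioo (0 : ℝ) δ, (T i s)ᴴ = -(T i s))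
    (hnahm : ∀ (i : Fin 3), ∀ s ∈ Ioo (0 : ℝ) δ, ∀ r c : Fin k,
      deriv (fun t => T i t r c) s =
        ((2⁻¹ : ℂ) • ∑ j : Fin 3, ∑ l : Fin 3,
          (eps i j l : ℂ) • ⁅T j s, T l s⁆) r c)
    (hlim : ∀ (i : Fin 3) (r c : Fin k),
      Tendsto (fun s : ℝ => (s : ℂ) * T i s r c)
        (nhdsWithin 0 (Ioo 0 δ)) (nhds (-(X i r c))))
    (hlim' : ∀ (i : Fin 3) (r c : Fin k),
      Tendsto (fun s : ℝ => (s : ℂ) ^ 2 * deriv (fun t => T i t r c) s)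
        (nhdsWithin 0 (Ioo 0 δ)) (nhds (X i r c))) :
    ∀ i j : Fin 3, ⁅X i, X j⁆ = ∑ l : Fin 3, (eps i j l : ℂ) • X l :=
  residues_form_su2_rep_general δ hδ T X hnahm hlim hlim'
end

section
/- Fix k ≥ 2 and complex numbers A_0, ..., A_{k-1} and B_1, ..., B_k (indices of A mod k, with A_k = A_0), satisfying: (i) A_i = -(1/2) A_i (B_i - B_{i+1}) for 1 ≤ i ≤ k-1 and A_0 = -(1/2) A_0(B_k - B_1); (ii) B_i = -(A_i² - A_{i-1}²); (iii) (k²-1)/4 = A_i² + (1/2)B_i + (1/4)B_i². Then at least one A_i equals 0. -/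
/-- Residue-variety equations for the affine Toda / Nahm boundary data force some `Aᵢ = 0`. -/
theorem residue_variety_some_A_zero (k : ℕ) (hk : 2 ≤ k)
    (A B : ZMod k → ℂ)
    (h1 : ∀ i : ZMod k, A i = -(1 / 2) * A i * (B i - B (i + 1)))
    (h2 : ∀ i : ZMod k, B i = -((A i) ^ 2 - (A (i - 1)) ^ 2))
    (h3 : ∀ i : ZMod k,
      ((k : ℂ) ^ 2 - 1) / 4 = (A i) ^ 2 + (1 / 2) * B i + (1 / 4) * (B i) ^ 2) :
    ∃ i : ZMod k, A i = 0 := by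
  by_contra h
  push_neg at h
  have step : ∀ i : ZMod k, B (i + 1) = B i + 2 := by
    intro i
    have hfac : A i * (B (i + 1) - B i - 2) = 0 := by
      linear_combination -2 * (h1 i)
    rcases mul_eq_zero.mp hfac with h' | h'
    · exact absurd h' (h i)
    · linear_combination h'
  have key : ∀ n : ℕ, B ((n : ZMod k)) = B 0 + 2 * n := by
    intro n
    induction n with
    | zero => simp
    | succ m ih =>
      push_cast
      rw [step ((m : ZMod k))]
      rw [ih]
      ring
  have hk0 : B ((k : ZMod k)) = B 0 + 2 * k := key k
  rw [ZMod.natCast_self] at hk0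
  have : (k : ℂ) = 0 := by linear_combination (-(1:ℂ)/2) * hk0
  exact absurd (Nat.cast_eq_zero.mp this) (by omega)
end

section
/- Fix k ≥ 2. Suppose complex numbers A_0, ..., A_{k-1} (with A_k = A_0, indices mod k) and B_1, ..., B_k satisfy B_i = -(A_i² - A_{i-1}²), (k²-1)/4 = A_i² + (1/2)B_i + (1/4)B_i², A_i(2 + B_i - B_{i+1}) = 0 for 1 ≤ i ≤ k-1, A_0(2 + B_k - B_1) = 0, and additionally A_0 = 0 and B_k = k-1. Then for all i with 1 ≤ i ≤ k-1, A_i² = i(k-i), and for all i with 1 ≤ i ≤ k, B_i = -(k - 2i + 1). -/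
/-- On the plane `A₀ = 0` with `B_k = k - 1`, the residue variety is exactly the point
`Aᵢ² = i(k-i)`, `Bᵢ = -(k - 2i + 1)`. -/
theorem residue_variety_on_plane (k : ℕ) (hk : 2 ≤ k)
    (A : ZMod k → ℂ) (B : ℕ → ℂ)
    (hB : ∀ i : ℕ, 1 ≤ i → i ≤ k →
      B i = -((A (i : ZMod k)) ^ 2 - (A ((i : ZMod k) - 1)) ^ 2))
    (hCas : ∀ i : ℕ, 1 ≤ i → i ≤ k →
      ((k : ℂ) ^ 2 - 1) / 4 = (A (i : ZMod k)) ^ 2 + (1 / 2) * B i + (1 / 4) * (B i) ^ 2)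
    (hrec : ∀ i : ℕ, 1 ≤ i → i ≤ k - 1 → A (i : ZMod k) * (2 + B i - B (i + 1)) = 0)
    (hwrap : A 0 * (2 + B k - B 1) = 0)
    (hA0 : A 0 = 0)
    (hBk : B k = (k : ℂ) - 1) :
    (∀ i : ℕ, 1 ≤ i → i ≤ k - 1 → (A (i : ZMod k)) ^ 2 = (i : ℂ) * ((k : ℂ) - i)) ∧
    (∀ i : ℕ, 1 ≤ i → i ≤ k → B i = -((k : ℂ) - 2 * i + 1)) := by
  have key : ∀ m : ℕ, ∀ j : ℕ, j = k - m → 1 ≤ j →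
      B j = 2 * (j : ℂ) - (k : ℂ) - 1 ∧
      (A ((j : ZMod k) - 1)) ^ 2 = ((j : ℂ) - 1) * ((k : ℂ) - (j : ℂ) + 1) := by
    intro m
    induction m with
    | zero =>
      intro j hj _
      have hjk : j = k := by omega
      subst hjk
      have hBj := hB j (by omega) (by omega)
      have hcast : ((j : ℕ) : ZMod j) = 0 := ZMod.natCast_self j
      rw [hcast, hA0] at hBj
      rw [hcast]
      constructor
      · linear_combination hBk
      · linear_combination -hBj + hBk
    | succ m ih =>
      intro j hj hj1
      have hjm : j + 1 = k - m := by omega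
      obtain ⟨hBj1, hAj⟩ := ih (j + 1) hjm (by omega)
      have harg : (((j + 1 : ℕ)) : ZMod k) - 1 = (j : ZMod k) := by
        push_cast; ring
      rw [harg] at hAj
      push_cast at hBj1 hAj
      -- A j ≠ 0
      have hAne : A (j : ZMod k) ≠ 0 := by
        intro h0
        rw [h0] at hAj
        have hnat : ((j * (k - j) : ℕ) : ℂ) = 0 := by
          push_cast [Nat.cast_sub (by omega : j ≤ k)]
          linear_combination -hAj
        have := Nat.cast_eq_zero.mp hnat
        have : j * (k - j) ≠ 0 := by
          have h1 : 0 < j := hj1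
          have h2 : 0 < k - j := by omega
          positivity
        omega
      have hfac : 2 + B j - B (j + 1) = 0 := by
        rcases mul_eq_zero.mp (hrec j hj1 (by omega)) with h | h
        · exact absurd h hAne
        · exact h
      have hBjval : B j = 2 * (j : ℂ) - (k : ℂ) - 1 := by
        linear_combination hBj1 + hfac
      have hBj' := hB j hj1 (by omega)
      exact ⟨hBjval, by linear_combination -hBj' + hBjval + hAj⟩
  constructor
  · intro i hi1 hi2
    obtain ⟨_, h⟩ := key (k - (i + 1)) (i + 1) (by omega) (by omega)
    have harg : (((i + 1 : ℕ)) : ZMod k) - 1 = (i : ZMod k) := by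
      push_cast; ring
    rw [harg] at h
    push_cast at h
    linear_combination h
  · intro i hi1 hi2
    obtain ⟨h, _⟩ := key (k - i) i (by omega) hi1
    linear_combination h
end

section
/- Let a_0, ..., a_{k-1}, b_1, ..., b_k : ℝ → ℝ satisfy the Flaschka Toda equations ȧ_i = (1/2)a_i(b_i - b_{i+1}), ḃ_i = a_i² - a_{i-1}² (indices mod k). If the constraints a_i² = a_{k-i}² and b_i + b_{k+1-i} = 0 hold at some time s₀, and all a_i are nowhere vanishing, then these constraints are preserved for all time: d/ds(a_i² - a_{k-i}²) and d/ds(b_i + b_{k+1-i}) vanish identically on the constraint set. -/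
/-- The folding constraints `aᵢ² = a_{k-i}²`, `bᵢ + b_{k+1-i} = 0` are preserved by the
Flaschka-form affine Toda flow: whenever they hold at a time `s₀`, the time derivatives of
the constraint functions vanish at `s₀`.  Indices are taken mod `k`
(so `a_{k-i} = a_{-i}` and `b_{k+1-i} = b_{1-i}` in `ZMod k`). -/
theorem toda_constraints_preserved (k : ℕ) (hk : 2 ≤ k)
    (a b : ZMod k → ℝ → ℝ)
    (hdiff : ∀ i : ZMod k, Differentiable ℝ (a i) ∧ Differentiable ℝ (b i))
    (htodaA : ∀ (i : ZMod k) (s : ℝ),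
      deriv (a i) s = (1 / 2) * a i s * (b i s - b (i + 1) s))
    (htodaB : ∀ (i : ZMod k) (s : ℝ),
      deriv (b i) s = (a i s) ^ 2 - (a (i - 1) s) ^ 2)
    (hnz : ∀ (i : ZMod k) (s : ℝ), a i s ≠ 0)
    (s₀ : ℝ)
    (hconstraint : ∀ i : ZMod k,
      (a i s₀) ^ 2 = (a (-i) s₀) ^ 2 ∧ b i s₀ + b (1 - i) s₀ = 0) :
    ∀ i : ZMod k,
      deriv (fun s => (a i s) ^ 2 - (a (-i) s) ^ 2) s₀ = 0 ∧
      deriv (fun s => b i s + b (1 - i) s) s₀ = 0 := by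
  intro i
  constructor
  · have h1 : HasDerivAt (fun s => (a i s) ^ 2 - (a (-i) s) ^ 2)
        ((2 * a i s₀ ^ 1) * deriv (a i) s₀ - (2 * a (-i) s₀ ^ 1) * deriv (a (-i)) s₀) s₀ := by
      exact (((hdiff i).1.differentiableAt.hasDerivAt).pow 2).sub
        (((hdiff (-i)).1.differentiableAt.hasDerivAt).pow 2)
    rw [h1.deriv, htodaA, htodaA]
    have hc1 := (hconstraint i).1
    have hc2 := (hconstraint i).2
    have hc3 := (hconstraint (-i)).2
    have e1 : -i + 1 = 1 - i := by ring
    have e2 : 1 - -i = 1 + i := by ring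
    have e3 : (1 : ZMod k) + i = i + 1 := by ring
    rw [e1] at *
    rw [e2, e3] at hc3
    have hb1 : b (-i) s₀ = - b (i + 1) s₀ := by linarith
    have hb2 : b (1 - i) s₀ = - b i s₀ := by linarith
    rw [hb1, hb2]
    linear_combination (b i s₀ - b (i + 1) s₀) * hc1
  · have h2 : HasDerivAt (fun s => b i s + b (1 - i) s)
        (deriv (b i) s₀ + deriv (b (1 - i)) s₀) s₀ := by
      exact ((hdiff i).2.differentiableAt.hasDerivAt).add
        ((hdiff (1 - i)).2.differentiableAt.hasDerivAt)
    rw [h2.deriv, htodaB, htodaB]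
    have hc1 := (hconstraint i).1
    have hc2 := (hconstraint (1 - i)).1
    have e1 : 1 - i - 1 = -i := by ring
    have e2 : -(1 - i) = i - 1 := by ring
    rw [e1] at *
    rw [e2] at hc2
    linarith [hc1, hc2]
end

section
/- Let P(ζ, η) = η^k + ∑_{i=2}^k α_i η^{k-i}ζ^i + β(ζ^{2k} + (-1)^k) with α_i, β ∈ ℝ and β ≠ 0. Suppose for some unimodular q ∈ ℂ the substitution (ζ, η) ↦ (-q̄/(qζ), η/(qζ)²) maps the zero set of P to itself, i.e., (qζ)^{2k} P(-q̄/(qζ), η/(qζ)²) = P(ζ, η) up to a nonzero constant. Then (-q²)^k = 1. -/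
/-!
Write the curve as `η^k + ∑ aᵢ η^(k-i) ζ^i + s ζ^(2k) + t` with `s = β`, `t = (-1)^k β`.
Since `q̄ = q⁻¹`, the rotation maps it to a curve of the same shape with `aᵢ ↦ (-1)^i aᵢ`,
`s ↦ t q^(2k)`, `t ↦ s q^(-2k)`. Comparing coefficients of `η^k` forces the constant to be `1`,
and then comparing coefficients of `ζ^(2k)` gives `β = (-1)^k β q^(2k)`, so `(-q²)^k = 1`.
-/

open Finset Polynomial

noncomputable section

namespace CyclicCurve

variable {K : Type*} [Field K]

def cyclicCurve (k : ℕ) (a : ℕ → K) (s t ζ η : K) : K :=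
  η ^ k + ∑ i ∈ Icc 2 k, a i * η ^ (k - i) * ζ ^ i + s * ζ ^ (2 * k) + t

def polyInEta (k : ℕ) (a : ℕ → K) (s t ζ : K) : K[X] :=
  X ^ k + ∑ i ∈ Icc 2 k, C (a i * ζ ^ i) * X ^ (k - i) + C (s * ζ ^ (2 * k) + t)

def polyInZeta (k : ℕ) (a : ℕ → K) (s t η : K) : K[X] :=
  C (η ^ k) + ∑ i ∈ Icc 2 k, C (a i * η ^ (k - i)) * X ^ i + C s * X ^ (2 * k) + C t

theorem eval_polyInEta (k : ℕ) (a : ℕ → K) (s t ζ η : K) :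
    (polyInEta k a s t ζ).eval η = cyclicCurve k a s t ζ η := by
  simp only [polyInEta, cyclicCurve, eval_add, eval_pow, eval_X, eval_finsetSum, eval_mul,
    eval_C, mul_right_comm _ (ζ ^ _) (η ^ _)]
  ring

theorem eval_polyInZeta (k : ℕ) (a : ℕ → K) (s t η ζ : K) :
    (polyInZeta k a s t η).eval ζ = cyclicCurve k a s t ζ η := by
  simp only [polyInZeta, cyclicCurve, eval_add, eval_pow, eval_X, eval_finsetSum, eval_mul,
    eval_C]

theorem coeff_polyInEta {k : ℕ} (hk : k ≠ 0) (a : ℕ → K) (s t ζ : K) :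
    (polyInEta k a s t ζ).coeff k = 1 := by
  have hsum : (∑ i ∈ Icc 2 k, C (a i * ζ ^ i) * X ^ (k - i)).coeff k = 0 := by
    rw [finsetSum_coeff]
    exact sum_eq_zero fun i hi => by rw [coeff_C_mul_X_pow, if_neg (by grind)]
  rw [polyInEta, coeff_add, coeff_add, coeff_X_pow_self, hsum, coeff_C, if_neg hk]
  ring

theorem coeff_polyInZeta {k : ℕ} (hk : k ≠ 0) (a : ℕ → K) (s t η : K) :
    (polyInZeta k a s t η).coeff (2 * k) = s := by
  have hsum : (∑ i ∈ Icc 2 k, C (a i * η ^ (k - i)) * X ^ i).coeff (2 * k) = 0 := by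
    rw [finsetSum_coeff]
    exact sum_eq_zero fun i hi => by rw [coeff_C_mul_X_pow, if_neg (by grind)]
  rw [polyInZeta, coeff_add, coeff_add, coeff_add, hsum, coeff_C_mul_X_pow, if_pos rfl, coeff_C,
    coeff_C, if_neg (by omega), if_neg (by omega)]
  ring

theorem eq_one_and_eq_of_cyclicCurve_eq_mul [Infinite K] {k : ℕ} (hk : k ≠ 0)
    {a a' : ℕ → K} {s t s' t' c : K}
    (h : ∀ ζ, ζ ≠ 0 → ∀ η, cyclicCurve k a s t ζ η = c * cyclicCurve k a' s' t' ζ η) :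
    c = 1 ∧ s = s' := by
  have hEta : polyInEta k a s t 1 = C c * polyInEta k a' s' t' 1 :=
    Polynomial.funext fun η => by simp [eval_polyInEta, h 1 one_ne_zero η]
  have hc : c = 1 := by
    simpa [coeff_polyInEta hk] using (congrArg (coeff · k) hEta).symm
  subst hc
  have hZeta : polyInZeta k a s t 0 = polyInZeta k a' s' t' 0 :=
    eq_of_infinite_eval_eq _ _ <| (Set.finite_singleton 0).infinite_compl.mono fun ζ hζ => by
      simpa [eval_polyInZeta] using h ζ hζ 0
  exact ⟨rfl, by simpa [coeff_polyInZeta hk] using congrArg (coeff · (2 * k)) hZeta⟩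

theorem cyclicCurve_rotate {k : ℕ} (a : ℕ → K) (s t : K) {q ζ : K} (hq : q ≠ 0) (hζ : ζ ≠ 0)
    (η : K) :
    (q * ζ) ^ (2 * k) * cyclicCurve k a s t (-q⁻¹ / (q * ζ)) (η / (q * ζ) ^ 2) =
      cyclicCurve k (fun i => (-1) ^ i * a i) (t * q ^ (2 * k)) (s / q ^ (2 * k)) ζ η := by
  have hqζ : q * ζ ≠ 0 := mul_ne_zero hq hζ
  have hstep : (q * ζ) ^ 2 * (-q⁻¹ / (q * ζ)) = -ζ := by field_simp
  have hterm : ∀ i ∈ Icc 2 k, (q * ζ) ^ (2 * k) *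
      (a i * (η / (q * ζ) ^ 2) ^ (k - i) * (-q⁻¹ / (q * ζ)) ^ i) =
        (-1) ^ i * a i * η ^ (k - i) * ζ ^ i := fun i hi => by
    have hk : 2 * k = 2 * (k - i) + 2 * i := by grind
    calc _ = a i * (((q * ζ) ^ 2) ^ (k - i) * (η / (q * ζ) ^ 2) ^ (k - i)) *
          ((q * ζ) ^ 2 * (-q⁻¹ / (q * ζ))) ^ i := by
          rw [hk, pow_add, pow_mul, pow_mul, mul_pow _ _ i]; ring
      _ = _ := by
          rw [← mul_pow, mul_div_cancel₀ _ (pow_ne_zero 2 hqζ), hstep, neg_pow]; ring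
  have hlead : (q * ζ) ^ (2 * k) * (η / (q * ζ) ^ 2) ^ k = η ^ k := by
    rw [pow_mul, div_pow]; field_simp
  have hs : (q * ζ) ^ (2 * k) * (s * (-q⁻¹ / (q * ζ)) ^ (2 * k)) = s / q ^ (2 * k) := by
    rw [div_pow, neg_pow, (even_two_mul k).neg_one_pow, one_mul, inv_pow]; field_simp
  simp only [cyclicCurve, mul_add, mul_sum, sum_congr rfl hterm, hlead, hs]
  ring

end CyclicCurve

end

open CyclicCurve in
theorem rotation_symmetry_constraint_general (k : ℕ) (hk : 2 ≤ k)
    (α : ℕ → ℝ) (β : ℝ) (hβ : β ≠ 0) (q : ℂ) (hq : ‖q‖ = 1)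
    (P : ℂ → ℂ → ℂ)
    (hP : ∀ ζ η : ℂ, P ζ η =
      η ^ k + (∑ i ∈ Finset.Icc 2 k, (α i : ℂ) * η ^ (k - i) * ζ ^ i) +
        (β : ℂ) * (ζ ^ (2 * k) + (-1) ^ k))
    (c : ℂ)
    (hsym : ∀ ζ : ℂ, ζ ≠ 0 → ∀ η : ℂ,
      P ζ η = c * (q * ζ) ^ (2 * k) *
        P (-(starRingEnd ℂ) q / (q * ζ)) (η / (q * ζ) ^ 2)) :
    (-q ^ 2) ^ k = 1 := by
  have hq0 : q ≠ 0 := norm_ne_zero_iff.mp (hq ▸ one_ne_zero)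
  have hPc : P = cyclicCurve k (fun i => (α i : ℂ)) β (β * (-1) ^ k) := by
    ext ζ η; rw [hP, cyclicCurve]; ring
  have hrot : ∀ ζ, ζ ≠ 0 → ∀ η, P ζ η = c * cyclicCurve k (fun i => (-1) ^ i * (α i : ℂ))
      (β * (-1) ^ k * q ^ (2 * k)) (β / q ^ (2 * k)) ζ η := fun ζ hζ η => by
    rw [hsym ζ hζ η, ← Complex.inv_eq_conj hq, hPc, mul_assoc, cyclicCurve_rotate _ _ _ hq0 hζ]
  have hβq := (eq_one_and_eq_of_cyclicCurve_eq_mul (by omega) (hPc ▸ hrot)).2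
  have hβ' : (β : ℂ) ≠ 0 := by exact_mod_cast hβ
  rw [neg_pow, ← pow_mul]
  exact (mul_left_cancel₀ hβ' (by linear_combination hβq)).symm

/-- If the order-2 rotation `(ζ, η) ↦ (-q̄/(qζ), η/(qζ)²)` about an axis orthogonal to the
`x₃`-axis preserves the cyclically symmetric spectral curve (up to a nonzero constant),
then `(-q²)^k = 1`. -/
theorem rotation_symmetry_constraint (k : ℕ) (hk : 2 ≤ k)
    (α : ℕ → ℝ) (β : ℝ) (hβ : β ≠ 0) (q : ℂ) (hq : ‖q‖ = 1)
    (P : ℂ → ℂ → ℂ)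
    (hP : ∀ ζ η : ℂ, P ζ η =
      η ^ k + (∑ i ∈ Finset.Icc 2 k, (α i : ℂ) * η ^ (k - i) * ζ ^ i) +
        (β : ℂ) * (ζ ^ (2 * k) + (-1) ^ k))
    (c : ℂ) (hc : c ≠ 0)
    (hsym : ∀ ζ : ℂ, ζ ≠ 0 → ∀ η : ℂ,
      P ζ η = c * (q * ζ) ^ (2 * k) *
        P (-(starRingEnd ℂ) q / (q * ζ)) (η / (q * ζ) ^ 2)) :
    (-q ^ 2) ^ k = 1 :=
  rotation_symmetry_constraint_general k hk α β hβ q hq P hP c hsym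
end

section
/- Let b_1, ..., b_k be real numbers and define M₃ to be the k²×k² diagonal matrix with diagonal entries m_{k(i-1)+j} = b_i + b_j for 1 ≤ i, j ≤ k. If M₃ has nontrivial kernel containing the vectorization of an invertible matrix C (i.e., there exists invertible C ∈ M_k(ℂ) with (b_i + b_j) C_{j,i} = 0 for all i, j), then there exists a permutation σ ∈ S_k with σ² = id such that b_i + b_{σ(i)} = 0 for all i. -/
open Matrix Equiv

/-- If the diagonal matrix `M₃` with entries `bᵢ + bⱼ` annihilates the vectorization of an
invertible matrix `C` (i.e. `(bᵢ + bⱼ)C_{j,i} = 0` for all `i, j`), then there is an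
order-two permutation `σ` with `bᵢ + b_{σ(i)} = 0` for all `i`. -/
theorem kernel_gives_involution (k : ℕ) (hk : 1 ≤ k) (b : Fin k → ℝ)
    (C : Matrix (Fin k) (Fin k) ℂ) (hC : IsUnit C)
    (h : ∀ i j : Fin k, ((b i + b j : ℝ) : ℂ) * C j i = 0) :
    ∃ σ : Equiv.Perm (Fin k), σ * σ = 1 ∧ ∀ i : Fin k, b i + b (σ i) = 0 := by
  -- Step 1: get a permutation τ such that C (τ i) i ≠ 0 for all i.
  have hdet : C.det ≠ 0 := by
    have := (Matrix.isUnit_iff_isUnit_det C).mp hC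
    exact IsUnit.ne_zero this
  have hτ : ∃ τ : Equiv.Perm (Fin k), ∀ i, C (τ i) i ≠ 0 := by
    by_contra hcon
    push_neg at hcon
    apply hdet
    rw [Matrix.det_apply]
    apply Finset.sum_eq_zero
    intro τ _
    obtain ⟨i, hi⟩ := hcon τ
    have : ∏ j : Fin k, C (τ j) j = 0 := Finset.prod_eq_zero (Finset.mem_univ i) hi
    rw [this, smul_zero]
  obtain ⟨τ, hτ⟩ := hτ
  -- Step 2: b (τ i) = - b i for all i.
  have hbτ : ∀ i, b (τ i) = - b i := by
    intro i
    have := h i (τ i)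
    rcases mul_eq_zero.mp this with h0 | h0
    · have : (b i + b (τ i) : ℝ) = 0 := by exact_mod_cast h0
      linarith
    · exact absurd h0 (hτ i)
  -- Step 3: build the involution via sorting.
  set s : Equiv.Perm (Fin k) := Tuple.sort b with hs
  have hmono : Monotone (b ∘ s) := Tuple.monotone_sort b
  have key : ∀ i, b (s (Fin.rev i)) = - b (s i) := by
    have hmono2 : Monotone (b ∘ (τ * s * Fin.revPerm : Equiv.Perm (Fin k))) := by
      intro i j hij
      simp only [Function.comp_apply, Equiv.Perm.mul_apply, Fin.revPerm_apply, hbτ]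
      have : Fin.rev j ≤ Fin.rev i := Fin.rev_le_rev.mpr hij
      exact neg_le_neg (hmono this)
    have h1 : b ∘ (τ * s * Fin.revPerm : Equiv.Perm (Fin k)) = b ∘ Tuple.sort b :=
      Tuple.comp_sort_eq_comp_iff_monotone.mpr hmono2
    intro i
    have := congrFun h1 i
    simp only [Function.comp_apply, Equiv.Perm.mul_apply, Fin.revPerm_apply, hbτ, ← hs] at this
    -- this : - b (s (Fin.rev i)) = b (s i)
    linarith
  refine ⟨s * Fin.revPerm * s⁻¹, ?_, ?_⟩
  · ext i
    simp [Equiv.Perm.mul_apply, Fin.rev_rev]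
  · intro i
    have := key (s⁻¹ i)
    simp only [Equiv.Perm.mul_apply, Fin.revPerm_apply]
    have hsi : s (s⁻¹ i) = i := Equiv.apply_symm_apply s i
    rw [this, hsi]
    ring
end

section
/- Let k ≥ 2, a_0, ..., a_{k-1} ∈ ℝ all nonzero, and m ∈ ℤ. Suppose v_1, ..., v_k ∈ ℂ satisfy v_{i+1} = (-1)^{m-1}(a_{k-i}/a_i) v_i for i = 1, ..., k-1 and a_0 v_k + (-1)^m a_0 v_1 = 0, with v_1 ≠ 0. Then (-1)^{k(m-1)} = 1; in particular, if k is odd then m must be odd. -/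
/-- Compatibility condition for the intertwiner of the rotation
`diag((-1)^m, (-1)^{m-1}, -1)` on real Sutcliffe-ansatz Nahm data: the recursion
`v_{i+1} = (-1)^{m-1}(a_{k-i}/aᵢ)vᵢ` together with the wrap-around relation forces
`(-1)^{k(m-1)} = 1`; in particular if `k` is odd then `m` is odd. -/
theorem rotation_sign_compatibility (k : ℕ) (hk : 2 ≤ k) (m : ℤ) (a : ℕ → ℝ)
    (hnz : ∀ i : ℕ, i ≤ k - 1 → a i ≠ 0)
    (v : ℕ → ℂ) (hv₁ : v 1 ≠ 0)
    (hrec : ∀ i : ℕ, 1 ≤ i → i ≤ k - 1 →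
      v (i + 1) = (-1 : ℂ) ^ (m - 1) * ((a (k - i) : ℂ) / (a i : ℂ)) * v i)
    (hwrap : (a 0 : ℂ) * v k + (-1 : ℂ) ^ m * (a 0 : ℂ) * v 1 = 0) :
    (-1 : ℂ) ^ ((k : ℤ) * (m - 1)) = 1 ∧ (Odd k → Odd m) := by
  set ε : ℂ := (-1 : ℂ) ^ (m - 1) with hε
  -- closed form for v (j+1)
  have key : ∀ j : ℕ, j ≤ k - 1 →
      v (j + 1) = ε ^ j * (∏ i ∈ Finset.Icc 1 j, ((a (k - i) : ℂ) / (a i : ℂ))) * v 1 := by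
    intro j
    induction j with
    | zero => intro _; simp
    | succ j ih =>
      intro hj
      have h1 : v (j + 1 + 1) = ε * ((a (k - (j+1)) : ℂ) / (a (j+1) : ℂ)) * v (j+1) :=
        hrec (j+1) (by omega) hj
      rw [h1, ih (by omega), Finset.prod_Icc_succ_top (by omega : 1 ≤ j + 1)]
      ring
  -- the telescoping product is 1
  have hprod : (∏ i ∈ Finset.Icc 1 (k-1), ((a (k - i) : ℂ) / (a i : ℂ))) = 1 := by
    rw [Finset.prod_div_distrib]
    have hre : (∏ i ∈ Finset.Icc 1 (k-1), ((a (k - i) : ℂ)))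
        = ∏ i ∈ Finset.Icc 1 (k-1), ((a i : ℂ)) := by
      refine Finset.prod_nbij' (fun i => k - i) (fun i => k - i) ?_ ?_ ?_ ?_ ?_ <;>
        intro x hx <;> simp only [Finset.mem_Icc] at hx ⊢ <;> first
          | omega
          | (congr 2; omega)
    rw [hre]
    apply div_self
    apply Finset.prod_ne_zero_iff.2
    intro i hi
    simp only [Finset.mem_Icc] at hi
    exact_mod_cast hnz i hi.2
  have hvk : v k = ε ^ (k - 1) * v 1 := by
    have := key (k - 1) le_rfl
    rw [show k - 1 + 1 = k by omega] at this
    rw [this, hprod, mul_one]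
  have ha0 : (a 0 : ℂ) ≠ 0 := by exact_mod_cast hnz 0 (Nat.zero_le _)
  have hwrap' : v k = -((-1 : ℂ) ^ m * v 1) := by
    have h : (a 0 : ℂ) * (v k + (-1 : ℂ) ^ m * v 1) = 0 := by linear_combination hwrap
    have h2 := (mul_eq_zero.1 h).resolve_left ha0
    linear_combination h2
  have hne : (-1 : ℂ) ≠ 0 := by norm_num
  have hmm : (-1 : ℂ) ^ m = -ε := by
    rw [hε, show m = (m - 1) + 1 by ring, zpow_add₀ hne, zpow_one]
    ring
  have hεk : ε ^ (k - 1) = ε := by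
    have h := hvk
    rw [hwrap', hmm] at h
    have : (ε ^ (k-1) - ε) * v 1 = 0 := by linear_combination -h
    rcases mul_eq_zero.1 this with h' | h'
    · exact sub_eq_zero.1 h'
    · exact absurd h' hv₁
  have hε2 : ε * ε = 1 := by
    rw [hε, ← zpow_add₀ hne]
    refine Even.neg_one_zpow ⟨m - 1, rfl⟩
  have main : (-1 : ℂ) ^ ((k : ℤ) * (m - 1)) = 1 := by
    rw [mul_comm, zpow_mul, ← hε, zpow_natCast,
      show k = (k - 1) + 1 by omega, pow_succ, hεk, hε2]
  refine ⟨main, fun hok => ?_⟩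
  rcases Int.even_or_odd m with he | ho
  · exfalso
    have hodd : Odd ((k : ℤ) * (m - 1)) := by
      refine Odd.mul (by exact_mod_cast hok) ?_
      rcases he with ⟨t, ht⟩
      exact ⟨t - 1, by omega⟩
    rw [hodd.neg_one_zpow] at main
    norm_num at main
  · exact ho
end
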